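/- In the monoid S, for every l ∈ ℤ and every s ∈ S with b·x_l ∈ sS, the element s equals a^k for some k ≥ 0, or a^k·b for some k ≥ 0, or b·x_l. -/

import Mathlib

/-- The alphabet of the monoid `S`: letters `a`, `b` and `x n`, `y n` for `n : ℤ`. -/
inductive SGen : Type
  | a : SGen
  | b : SGen
  | x : ℤ → SGen
  | y : ℤ → SGen

/-- The defining relations of `S`: `a·b·x n = b·x n` and `a·b·y n = b·y (n+1)` for `n ∈ ℤ`. -/
inductive SRel : FreeMonoid SGen → FreeMonoid SGen → Prop
  | xr (n : ℤ) : SRel (.of .a * .of .b * .of (.x n)) (.of .b * .of (.x n))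
  | yr (n : ℤ) : SRel (.of .a * .of .b * .of (.y n)) (.of .b * .of (.y (n + 1)))

/-- The monoid `S` presented by the generators `SGen` and the relations `SRel`. -/
abbrev S : Type := PresentedMonoid SRel

/-- The images of the generators in `S`. -/
def gen (g : SGen) : S := PresentedMonoid.of SRel g

/-- The principal right ideal `sS` of a monoid. -/
def rIdeal {M : Type*} [Monoid M] (s : M) : Set M := {m | ∃ u, m = s * u}

/-!
Prepending a letter to a word, where an `a` landing in front of `b·xₙ` is absorbed and one landing
in front of `b·yₙ` turns it into `b·yₙ₊₁`, respects both defining relations, so it is a left action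
of `S` on words. If `s·u = b·xₗ`, then `s` sends the word `u • []` to `b·xₗ`; reading `s` letter by
letter from the left, this is only possible when `s` is `aᵏ`, `aᵏ·b` or `aᵏ·b·xₗ = b·xₗ`.
-/

def reduceCons : SGen → List SGen → List SGen
  | .a, .b :: .x n :: t => .b :: .x n :: t
  | .a, .b :: .y n :: t => .b :: .y (n + 1) :: t
  | g, t => g :: t

lemma reduceCons_ne_nil (g : SGen) (t : List SGen) : reduceCons g t ≠ [] := by
  unfold reduceCons; split <;> simp

lemma eq_of_reduceCons_eq_x_cons {g : SGen} {t r : List SGen} {l : ℤ}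
    (h : reduceCons g t = .x l :: r) : g = .x l ∧ t = r := by
  unfold reduceCons at h; split at h <;> simp_all

lemma eq_of_reduceCons_eq_b_x_cons {g : SGen} {t r : List SGen} {l : ℤ}
    (h : reduceCons g t = .b :: .x l :: r) :
    (g = .b ∧ t = .x l :: r) ∨ (g = .a ∧ t = .b :: .x l :: r) := by
  unfold reduceCons at h; split at h <;> simp_all

def wordAction : S →* Function.End (List SGen) :=
  PresentedMonoid.lift (M := Function.End (List SGen)) reduceCons (by rintro _ _ (_ | _) <;> rfl)

lemma wordAction_gen_mul (g : SGen) (s : S) (t : List SGen) :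
    wordAction (gen g * s) t = reduceCons g (wordAction s t) := by
  rw [map_mul]; rfl

lemma S.induction_on_gen {motive : S → Prop} (s : S) (one : motive 1)
    (gen_mul : ∀ g s, motive s → motive (gen g * s)) : motive s := by
  induction s using PresentedMonoid.inductionOn with
  | h w =>
    induction w using FreeMonoid.inductionOn' with
    | one => exact one
    | of_mul g w ih => rw [map_mul]; exact gen_mul g _ ih

lemma eq_one_of_wordAction_eq_nil {s : S} {t : List SGen} (h : wordAction s t = []) : s = 1 := by
  induction s using S.induction_on_gen with
  | one => rfl
  | gen_mul g s _ => exact absurd (wordAction_gen_mul g s t ▸ h) (reduceCons_ne_nil _ _)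

lemma eq_of_wordAction_eq_x {s : S} {t : List SGen} {l : ℤ} (h : wordAction s t = [.x l]) :
    s = 1 ∨ s = gen (.x l) := by
  induction s using S.induction_on_gen with
  | one => exact .inl rfl
  | gen_mul g s _ =>
    rw [wordAction_gen_mul] at h
    obtain ⟨rfl, hs⟩ := eq_of_reduceCons_eq_x_cons h
    exact .inr (by rw [eq_one_of_wordAction_eq_nil hs, mul_one])

lemma gen_a_mul_gen_b_mul_gen_x (l : ℤ) :
    gen .a * (gen .b * gen (.x l)) = gen .b * gen (.x l) := by
  rw [← mul_assoc]; exact PresentedMonoid.mk_eq_mk_of_rel (.xr l)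

lemma eq_of_wordAction_eq_b_x {s : S} {t : List SGen} {l : ℤ}
    (h : wordAction s t = [.b, .x l]) :
    (∃ k : ℕ, s = gen .a ^ k) ∨ (∃ k : ℕ, s = gen .a ^ k * gen .b) ∨
      s = gen .b * gen (.x l) := by
  induction s using S.induction_on_gen with
  | one => exact .inl ⟨0, rfl⟩
  | gen_mul g s ih =>
    rw [wordAction_gen_mul] at h
    rcases eq_of_reduceCons_eq_b_x_cons h with ⟨rfl, hs⟩ | ⟨rfl, hs⟩
    · rcases eq_of_wordAction_eq_x hs with rfl | rfl
      · exact .inr (.inl ⟨0, by rw [mul_one, pow_zero, one_mul]⟩)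
      · exact .inr (.inr rfl)
    · rcases ih hs with ⟨k, rfl⟩ | ⟨k, rfl⟩ | rfl
      · exact .inl ⟨k + 1, (pow_succ' _ _).symm⟩
      · exact .inr (.inl ⟨k + 1, by rw [pow_succ', mul_assoc]⟩)
      · exact .inr (.inr (gen_a_mul_gen_b_mul_gen_x l))

/-- If `b·xₗ ∈ sS`, then `s = aᵏ` for some `k ≥ 0`, or `s = aᵏ·b` for some `k ≥ 0`,
or `s = b·xₗ`. -/
theorem S_divisors_of_bx (l : ℤ) (s : S) (h : gen .b * gen (.x l) ∈ rIdeal s) :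
    (∃ k : ℕ, s = gen .a ^ k) ∨ (∃ k : ℕ, s = gen .a ^ k * gen .b) ∨
      s = gen .b * gen (.x l) := by
  obtain ⟨u, hu⟩ := h
  refine eq_of_wordAction_eq_b_x (t := wordAction u []) ?_
  calc wordAction s (wordAction u []) = wordAction (s * u) [] := by rw [map_mul]; rfl
    _ = [.b, .x l] := by rw [← hu]; rfl
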